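/- Let P be a probability distribution on ℝ^d × {−1,1} and let f, f' : ℝ^d → ℝ be measurable functions satisfying E_{X∼P_X}[r(sign(f(X))·f'(X))] ≤ E_{X∼P_X}[r(|f(X)|)] (which holds whenever f' minimizes the pseudolabeled ramp loss with pseudolabels from f over a class containing f). Then the unlabeled loss decreases: E_{X∼P_X}[r(|f'(X)|)] ≤ E_{X∼P_X}[r(|f(X)|)]. -/

import Mathlib

open MeasureTheory

noncomputable section

/-- `ℝ^d` with the Euclidean norm. -/
abbrev Euc (d : ℕ) : Type := EuclideanSpace ℝ (Fin d)

/-- The ramp loss: `r(m) = 1` for `m ≤ 0`, `1 - m` for `0 ≤ m ≤ 1`, `0` for `m ≥ 1`. -/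
def ramp (m : ℝ) : ℝ := max 0 (min 1 (1 - m))

/-- `sign(t) = 1` if `t ≥ 0`, `-1` otherwise. -/
def sgn (t : ℝ) : ℝ := if 0 ≤ t then 1 else -1

/-- The linear model `M_θ(x) = ⟨w, x⟩ + b` for `θ = (w, b)`. -/
def model {d : ℕ} (θ : Euc d × ℝ) (x : Euc d) : ℝ := (inner ℝ θ.1 x : ℝ) + θ.2

/-- Ramp loss of a linear model on a distribution over `ℝ^d × {-1,1}`. -/
def lossR {d : ℕ} (θ : Euc d × ℝ) (P : Measure (Euc d × ℝ)) : ℝ :=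
  ∫ p, ramp (p.2 * model θ p.1) ∂P

/-- 0-1 error of a linear model on a distribution over `ℝ^d × {-1,1}`. -/
def errP {d : ℕ} (θ : Euc d × ℝ) (P : Measure (Euc d × ℝ)) : ℝ :=
  (P {p | sgn (model θ p.1) ≠ p.2}).toReal

/-- Pseudolabeled ramp loss of `θ'` on the `X`-marginal of `Q`, with pseudolabels from `θ`. -/
def pseudoLossR {d : ℕ} (θ θ' : Euc d × ℝ) (Q : Measure (Euc d × ℝ)) : ℝ :=
  ∫ x, ramp (sgn (model θ x) * model θ' x) ∂(Q.map Prod.fst)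

/-- `Q` is a `ρ`-shift of `P`: there are measurable maps `f₋₁, f₁`, each moving every point by
at most `ρ`, such that `Q` is the law of `(f_Y(X), Y)` for `(X, Y) ∼ P`. -/
def IsShift {d : ℕ} (P Q : Measure (Euc d × ℝ)) (ρ : ℝ) : Prop :=
  ∃ fneg fpos : Euc d → Euc d, Measurable fneg ∧ Measurable fpos ∧
    (∀ x, ‖fneg x - x‖ ≤ ρ) ∧ (∀ x, ‖fpos x - x‖ ≤ ρ) ∧
    Q = P.map (fun p => (if p.2 = 1 then fpos p.1 else fneg p.1, p.2))


lemma ramp_anti : Antitone ramp := fun a b hab => by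
  unfold ramp
  exact max_le_max le_rfl (min_le_min le_rfl (by linarith))

lemma ramp_nonneg (m : ℝ) : 0 ≤ ramp m := le_max_left _ _

lemma ramp_le_one (m : ℝ) : ramp m ≤ 1 := by
  unfold ramp
  exact max_le zero_le_one (min_le_left _ _)

lemma ramp_measurable : Measurable ramp := by
  have : Continuous ramp := by
    unfold ramp
    exact continuous_const.max (continuous_const.min (continuous_const.sub continuous_id))
  exact this.measurable

lemma sgn_measurable : Measurable sgn := by
  unfold sgn
  exact Measurable.ite (measurableSet_le measurable_const measurable_id)
    measurable_const measurable_const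

lemma integrable_ramp_comp {α : Type*} [MeasurableSpace α] (μ : Measure α)
    [IsFiniteMeasure μ] (g : α → ℝ) (hg : Measurable g) :
    Integrable (fun x => ramp (g x)) μ := by
  refine ⟨(ramp_measurable.comp hg).aestronglyMeasurable, ?_⟩
  apply HasFiniteIntegral.of_bounded (C := 1)
  filter_upwards with x
  rw [Real.norm_eq_abs, abs_of_nonneg (ramp_nonneg _)]
  exact ramp_le_one _

/-- Self-training does not increase the unlabeled loss. -/
theorem stmt9 {d : ℕ} (P : Measure (Euc d × ℝ)) [IsProbabilityMeasure P]
    (hlab : P {p | p.2 = 1 ∨ p.2 = -1} = 1)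
    (f f' : Euc d → ℝ) (hf : Measurable f) (hf' : Measurable f')
    (hst : ∫ x, ramp (sgn (f x) * f' x) ∂(P.map Prod.fst) ≤ ∫ x, ramp |f x| ∂(P.map Prod.fst)) :
    ∫ x, ramp |f' x| ∂(P.map Prod.fst) ≤ ∫ x, ramp |f x| ∂(P.map Prod.fst) := by
  refine le_trans ?_ hst
  apply integral_mono
  · exact integrable_ramp_comp _ _ (hf'.comp measurable_id).abs
  · exact integrable_ramp_comp _ _ ((sgn_measurable.comp hf).mul hf')
  · intro x
    apply ramp_anti
    rcases le_or_gt 0 (f x) with h | h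
    · simp only [sgn, if_pos h, one_mul]; exact le_abs_self _
    · simp only [sgn, if_neg (not_le.2 h), neg_one_mul]; exact neg_le_abs _
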